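/- arXiv:math/9605206 — 3 statements merged into one kernel-verified Lean document; each statement's English description precedes it below -/
import Mathlib

section
/- In the Laurent polynomial ring ℤ[x₁^{±1}, x₂^{±1}], for any integers m ≥ 1 and n ≥ 1, the element w = x₁^{m-1} x₂^n + x₁^{m-2} x₂^n + ... + x₁ x₂^n + x₂^n - x₂^{n-1} - ... - x₂ - 1 is not divisible by v = x₂ + x₁ - 2. -/
/-- The Laurent polynomial ring `ℤ[x₁^{±1}, x₂^{±1}]` in two variables,
realized as the group algebra of `ℤ²` over `ℤ`. -/
noncomputable def LaurentTwo : Type := AddMonoidAlgebra ℤ (Fin 2 →₀ ℤ)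

noncomputable instance : CommRing LaurentTwo :=
  inferInstanceAs (CommRing (AddMonoidAlgebra ℤ (Fin 2 →₀ ℤ)))

/-- The variable `xᵢ` of the Laurent polynomial ring (`i = 0` is `x₁`,
`i = 1` is `x₂`). -/
noncomputable def Lvar (i : Fin 2) : LaurentTwo :=
  AddMonoidAlgebra.single (Finsupp.single i 1) 1

/-!
Evaluate at `x₁ = -1`, `x₂ = 3`, a zero of `v`. A multiple of `v` would evaluate to `0`, but `w`
evaluates to `s · 3ⁿ - (3ⁿ - 1) / 2` with `s = ∑_{k<m} (-1)ᵏ ∈ {0, 1}`, that is to `±3ⁿ + 1` up to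
a factor `2`, which is nonzero for `n ≥ 1`.
-/

namespace LaurentTwo

variable {R : Type*} [CommRing R]

def monomialHom (u : Fin 2 → Rˣ) : Multiplicative (Fin 2 →₀ ℤ) →* Rˣ where
  toFun g := ∏ i, u i ^ g.toAdd i
  map_one' := by simp
  map_mul' a b := by simp only [toAdd_mul, Finsupp.add_apply, zpow_add, Finset.prod_mul_distrib]

noncomputable def eval (u : Fin 2 → Rˣ) : LaurentTwo →+* R :=
  (AddMonoidAlgebra.lift ℤ R (Fin 2 →₀ ℤ) ((Units.coeHom R).comp (monomialHom u))).toRingHom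

@[simp]
lemma eval_Lvar (u : Fin 2 → Rˣ) (i : Fin 2) : eval u (Lvar i) = u i := by
  change AddMonoidAlgebra.lift ℤ R (Fin 2 →₀ ℤ) ((Units.coeHom R).comp (monomialHom u))
    (AddMonoidAlgebra.single (Finsupp.single i 1) 1) = u i
  rw [AddMonoidAlgebra.lift_single]
  fin_cases i <;> simp [monomialHom]

end LaurentTwo

lemma neg_one_geom_sum_mul_three_pow_sub_geom_sum_ne_zero (m : ℕ) {n : ℕ} (hn : 1 ≤ n) :
    (∑ k ∈ Finset.range m, (-1 : ℚ) ^ k) * 3 ^ n - ∑ k ∈ Finset.range n, (3 : ℚ) ^ k ≠ 0 := by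
  have h_geom : (∑ k ∈ Finset.range n, (3 : ℚ) ^ k) * 2 = 3 ^ n - 1 := by
    simpa [show (3 : ℚ) - 1 = 2 by norm_num] using geom_sum_mul (3 : ℚ) n
  have h_pow : (1 : ℚ) < 3 ^ n := one_lt_pow₀ (by norm_num) (by omega)
  rw [neg_one_geom_sum]
  split_ifs <;> intro h <;> nlinarith

theorem laurent_not_dvd_general (m n : ℕ) (hn : 1 ≤ n) :
    ¬ (Lvar 1 + Lvar 0 - 2) ∣
      ((∑ k ∈ Finset.range m, (Lvar 0) ^ k) * (Lvar 1) ^ n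
        - ∑ k ∈ Finset.range n, (Lvar 1) ^ k) := by
  rintro ⟨z, hz⟩
  let u : Fin 2 → ℚˣ := ![-1, Units.mk0 3 (by norm_num)]
  have hv : LaurentTwo.eval u (Lvar 1 + Lvar 0 - 2) = 0 := by norm_num [u, map_ofNat]
  have hw := congrArg (LaurentTwo.eval u) hz
  rw [map_mul, hv, zero_mul] at hw
  refine neg_one_geom_sum_mul_three_pow_sub_geom_sum_ne_zero m hn ?_
  simpa [u] using hw

/-- For `m ≥ 1`, `n ≥ 1`, the element
`w = x₁^{m-1} x₂^n + ... + x₁ x₂^n + x₂^n - x₂^{n-1} - ... - x₂ - 1`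
is not divisible by `v = x₂ + x₁ - 2` in `ℤ[x₁^{±1}, x₂^{±1}]`. -/
theorem laurent_not_dvd (m n : ℕ) (hm : 1 ≤ m) (hn : 1 ≤ n) :
    ¬ (Lvar 1 + Lvar 0 - 2) ∣
      ((∑ k ∈ Finset.range m, (Lvar 0) ^ k) * (Lvar 1) ^ n
        - ∑ k ∈ Finset.range n, (Lvar 1) ^ k) :=
  laurent_not_dvd_general m n hn
end

section
/- Let φ and ψ be IA-endomorphisms of the free group F on x₁,...,xₙ (endomorphisms inducing the identity on F/[F,F]), and let J^a denote the image of the Fox Jacobian matrix in the abelianized group ring ℤ[F/F']. Then J^a_{φ∘ψ} = J^a_φ · J^a_ψ. -/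
/-!
Fox's chain rule `∂ⱼ(ψ w) = Σₖ ψ(∂ₖ w) · ∂ⱼ(ψ xₖ)` holds in `ℤF` for every endomorphism `ψ`.
Applied to `w = φ(xᵢ)` it expresses `J_{ψ∘φ}` as `ψ(J_φ) · J_ψ`, and after projecting to
`ℤ[F/F']` the twist by `ψ` disappears because `ψ` induces the identity on `F/F'`.
-/

open MonoidAlgebra

/-- A system of left Fox derivatives on the group ring `ℤF` of the free group
`F` on `n` generators. -/
structure FoxDerivatives (n : ℕ) where
  d : Fin n → MonoidAlgebra ℤ (FreeGroup (Fin n)) →ₗ[ℤ] MonoidAlgebra ℤ (FreeGroup (Fin n))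
  d_gen : ∀ j i : Fin n,
    d j (of ℤ (FreeGroup (Fin n)) (FreeGroup.of i)) = if i = j then 1 else 0
  d_mul : ∀ (j : Fin n) (g h : FreeGroup (Fin n)),
    d j (of ℤ (FreeGroup (Fin n)) (g * h)) =
      d j (of ℤ (FreeGroup (Fin n)) g) +
        of ℤ (FreeGroup (Fin n)) g * d j (of ℤ (FreeGroup (Fin n)) h)

/-- The projection `ℤF → ℤ[F/F']` onto the abelianized group ring. -/
noncomputable def abProj (n : ℕ) :
    MonoidAlgebra ℤ (FreeGroup (Fin n)) →+*
      MonoidAlgebra ℤ (Abelianization (FreeGroup (Fin n))) :=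
  mapDomainRingHom ℤ (Abelianization.of (G := FreeGroup (Fin n)))

/-- The abelianized Fox Jacobian matrix `J^a_φ` of an endomorphism `φ`. -/
noncomputable def abFoxJacobian {n : ℕ} (D : FoxDerivatives n)
    (φ : FreeGroup (Fin n) →* FreeGroup (Fin n)) :
    Matrix (Fin n) (Fin n) (MonoidAlgebra ℤ (Abelianization (FreeGroup (Fin n)))) :=
  Matrix.of fun i j => abProj n (D.d j (of ℤ (FreeGroup (Fin n)) (φ (FreeGroup.of i))))

lemma MonoidAlgebra.mapDomainRingHom_of {k G H : Type*} [CommSemiring k] [Monoid G] [Monoid H]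
    (f : G →* H) (g : G) : mapDomainRingHom k f (of k G g) = of k H (f g) := by
  simp [mapDomain_single]

namespace FoxDerivatives

variable {n : ℕ}
local notation "F" => FreeGroup (Fin n)

variable (D : FoxDerivatives n) (j : Fin n)

lemma d_one : D.d j 1 = 0 := by
  have h := D.d_mul j 1 1
  rw [mul_one, map_one, one_mul] at h
  exact left_eq_add.mp h

lemma d_of_inv (g : F) : D.d j (of ℤ F g⁻¹) = -(of ℤ F g⁻¹ * D.d j (of ℤ F g)) := by
  have h : of ℤ F g * D.d j (of ℤ F g⁻¹) = -D.d j (of ℤ F g) := by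
    have := D.d_mul j g g⁻¹
    rw [mul_inv_cancel, map_one, d_one] at this
    exact eq_neg_of_add_eq_zero_right this.symm
  calc D.d j (of ℤ F g⁻¹) = of ℤ F g⁻¹ * (of ℤ F g * D.d j (of ℤ F g⁻¹)) := by
        rw [← mul_assoc, ← map_mul, inv_mul_cancel, map_one, one_mul]
    _ = -(of ℤ F g⁻¹ * D.d j (of ℤ F g)) := by rw [h, mul_neg]

theorem d_of_map (ψ : F →* F) (w : F) :
    D.d j (of ℤ F (ψ w)) =
      ∑ k, mapDomainRingHom ℤ ψ (D.d k (of ℤ F w)) * D.d j (of ℤ F (ψ (FreeGroup.of k))) := by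
  induction w using FreeGroup.induction_on with
  | C1 => simp only [map_one, d_one, map_zero, zero_mul, Finset.sum_const_zero]
  | of i =>
    simp only [D.d_gen, apply_ite, map_one, map_zero, ite_mul, one_mul, zero_mul,
      Finset.sum_ite_eq, Finset.mem_univ, if_true]
  | inv_of i ih =>
    rw [map_inv, d_of_inv, ih]
    simp only [d_of_inv, map_neg, map_mul, mapDomainRingHom_of, map_inv, Finset.mul_sum, neg_mul,
      Finset.sum_neg_distrib, mul_assoc]
  | mul u v ihu ihv =>
    rw [map_mul, D.d_mul, ihu, ihv]
    simp only [D.d_mul, map_add, add_mul, Finset.sum_add_distrib]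
    simp only [map_mul, mapDomainRingHom_of, Finset.mul_sum, mul_assoc]

end FoxDerivatives

lemma abProj_mapDomainRingHom {n : ℕ} (ψ : FreeGroup (Fin n) →* FreeGroup (Fin n))
    (hψ : ∀ g, Abelianization.of (ψ g) = Abelianization.of g)
    (x : MonoidAlgebra ℤ (FreeGroup (Fin n))) :
    abProj n (mapDomainRingHom ℤ ψ x) = abProj n x := by
  have : Abelianization.of.comp ψ = Abelianization.of := MonoidHom.ext hψ
  rw [abProj, ← RingHom.comp_apply, ← mapDomainRingHom_comp, this]

theorem ab_fox_jacobian_product_rule_general {n : ℕ} (D : FoxDerivatives n)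
    (φ ψ : FreeGroup (Fin n) →* FreeGroup (Fin n))
    (hψ : ∀ g : FreeGroup (Fin n), Abelianization.of (ψ g) = Abelianization.of g) :
    abFoxJacobian D (ψ.comp φ) = abFoxJacobian D φ * abFoxJacobian D ψ := by
  ext i j : 1
  simp only [abFoxJacobian, Matrix.of_apply, Matrix.mul_apply, MonoidHom.comp_apply,
    D.d_of_map j ψ (φ _), map_sum, map_mul, abProj_mapDomainRingHom ψ hψ]

/-- For IA-endomorphisms `φ, ψ` of the free group (inducing the identity on
`F/[F,F]`), the abelianized Jacobian matrices satisfy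
`J^a_{φ∘ψ} = J^a_φ · J^a_ψ`, where `φ∘ψ` sends `xᵢ` to `ψ(φ(xᵢ))`. -/
theorem ab_fox_jacobian_product_rule {n : ℕ} (D : FoxDerivatives n)
    (φ ψ : FreeGroup (Fin n) →* FreeGroup (Fin n))
    (hφ : ∀ g : FreeGroup (Fin n), Abelianization.of (φ g) = Abelianization.of g)
    (hψ : ∀ g : FreeGroup (Fin n), Abelianization.of (ψ g) = Abelianization.of g) :
    abFoxJacobian D (ψ.comp φ) = abFoxJacobian D φ * abFoxJacobian D ψ :=
  ab_fox_jacobian_product_rule_general D φ ψ hψ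
end

section
/- In the free metabelian group M₂ on x₁, x₂, let s ∈ M₂' with s ≠ 1, and let φ be the IA-endomorphism with φ(x₁) = x₁s and φ(x₂) = x₂s^{-1}. Then φ has no non-trivial fixed points: φ(g) = g implies g = 1. -/
/-- The free group of rank 2. -/
abbrev F2 := FreeGroup Bool

/-- The second derived subgroup `F₂''` of the free group of rank 2. -/
abbrev secondDerived : Subgroup F2 := ⁅commutator F2, commutator F2⁆

instance : (secondDerived).Normal := Subgroup.commutator_normal _ _

/-- The free metabelian group of rank 2, `M₂ = F₂/F₂''`. -/
abbrev M2 := F2 ⧸ secondDerived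

/-- The generators `x₁` (`b = false`) and `x₂` (`b = true`) of `M₂`. -/
def mx (b : Bool) : M2 := QuotientGroup.mk (FreeGroup.of b)

open scoped commutatorElement

@[ext]
structure Mag (R : Type) [CommRing R] where
  a : Rˣ
  v : R × R
namespace Mag
variable {R : Type} [CommRing R]
instance : Mul (Mag R) := ⟨fun g h => ⟨g.a * h.a, g.v + (g.a : R) • h.v⟩⟩
instance : One (Mag R) := ⟨⟨1, 0⟩⟩
instance : Inv (Mag R) := ⟨fun g => ⟨g.a⁻¹, -(((g.a⁻¹ : Rˣ) : R) • g.v)⟩⟩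
@[simp] lemma mul_a (g h : Mag R) : (g * h).a = g.a * h.a := rfl
@[simp] lemma mul_v (g h : Mag R) : (g * h).v = g.v + (g.a : R) • h.v := rfl
@[simp] lemma one_a : (1 : Mag R).a = 1 := rfl
@[simp] lemma one_v : (1 : Mag R).v = 0 := rfl
@[simp] lemma inv_a (g : Mag R) : (g⁻¹).a = g.a⁻¹ := rfl
@[simp] lemma inv_v (g : Mag R) : (g⁻¹).v = -(((g.a⁻¹ : Rˣ) : R) • g.v) := rfl
instance : Group (Mag R) where
  mul_assoc g h k := by
    ext <;> simp [mul_assoc, smul_smul, add_assoc, smul_add, Units.val_mul]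
  one_mul g := by ext <;> simp
  mul_one g := by ext <;> simp
  inv_mul_cancel g := by
    ext <;> simp [smul_smul, ← Units.val_mul]

lemma mul_mk (a b : Rˣ) (u v : R × R) :
    (⟨a, u⟩ : Mag R) * ⟨b, v⟩ = ⟨a * b, u + (a : R) • v⟩ := rfl

lemma inv_mk (a : Rˣ) (u : R × R) :
    (⟨a, u⟩ : Mag R)⁻¹ = ⟨a⁻¹, -(((a⁻¹ : Rˣ) : R) • u)⟩ := rfl

lemma unip_mul (u v : R × R) : (⟨1, u⟩ : Mag R) * ⟨1, v⟩ = ⟨1, u + v⟩ := by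
  ext <;> simp

lemma unip_zpow (u : R × R) (k : ℤ) : (⟨1, u⟩ : Mag R) ^ k = ⟨1, k • u⟩ := by
  induction k using Int.induction_on with
  | zero => ext <;> simp
  | succ n ih => rw [zpow_add_one, ih, unip_mul]; ext <;> simp [add_smul] <;> ring
  | pred n ih =>
      rw [zpow_sub_one, ih]
      ext <;> simp [sub_smul, Prod.ext_iff] <;> module

lemma zpow_exists (a : Rˣ) (u : R × R) (k : ℤ) :
    ∃ r : R, (⟨a, u⟩ : Mag R) ^ k = ⟨a ^ k, r • u⟩ ∧
      ((a : R) - 1) * r = ((a ^ k : Rˣ) : R) - 1 := by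
  induction k using Int.induction_on with
  | zero => exact ⟨0, by ext <;> simp, by simp⟩
  | succ n ih =>
      obtain ⟨r, h1, h2⟩ := ih
      refine ⟨r + ((a ^ (n : ℤ) : Rˣ) : R), ?_, ?_⟩
      · rw [zpow_add_one, h1]
        ext <;> simp [add_smul, smul_smul, Units.val_mul, zpow_add_one] <;> ring
      · rw [mul_add, h2, zpow_add_one]
        simp [Units.val_mul]; ring
  | pred n ih =>
      obtain ⟨r, h1, h2⟩ := ih
      have key : ((a ^ (-(n:ℤ)) : Rˣ) : R) * ((a⁻¹ : Rˣ) : R) = ((a ^ (-(n:ℤ) - 1) : Rˣ) : R) := by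
        rw [← Units.val_mul, ← zpow_sub_one]
      have key2 : (a : R) * ((a ^ (-(n:ℤ) - 1) : Rˣ) : R) = ((a ^ (-(n:ℤ)) : Rˣ) : R) := by
        have h3 : a * a ^ (-(n:ℤ) - 1) = a ^ (-(n:ℤ)) := by
          rw [mul_comm, ← zpow_add_one]; norm_num
        calc (a : R) * ((a ^ (-(n:ℤ) - 1) : Rˣ) : R) = ((a * a ^ (-(n:ℤ) - 1) : Rˣ) : R) := by
              rw [Units.val_mul]
          _ = _ := by rw [h3]
      refine ⟨r - ((a ^ (-(n : ℤ) - 1) : Rˣ) : R), ?_, ?_⟩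
      · rw [zpow_sub_one, h1, inv_mk, mul_mk]
        congr 1
        · rw [← zpow_sub_one]
        · rw [smul_neg, smul_smul, key]
          module
      · rw [mul_sub, h2, sub_mul, one_mul, key2]
        ring

lemma commElt (g h : Mag R) :
    ⁅g, h⁆ = ⟨1, (1 - (h.a : R)) • g.v + ((g.a : R) - 1) • h.v⟩ := by
  rw [commutatorElement_def]
  obtain ⟨A, u⟩ := g
  obtain ⟨B, w⟩ := h
  ext <;>
    simp [smul_smul, smul_add, sub_smul, one_smul, Units.val_mul, smul_neg, mul_comm, mul_left_comm] <;>
    rw [show ((A : R) * ↑B * ↑A⁻¹ : R) = (B : R) by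
      rw [← Units.val_mul, ← Units.val_mul, mul_comm A B, mul_inv_cancel_right]] <;>
    ring

lemma conj_unip (g : Mag R) (v : R × R) :
    g * ⟨1, v⟩ * g⁻¹ = ⟨1, (g.a : R) • v⟩ := by
  ext <;> simp [smul_smul, ← Units.val_mul]

/-- The projection to the `a`-component. -/
def projA : Mag R →* Rˣ where
  toFun g := g.a
  map_one' := rfl
  map_mul' _ _ := rfl

end Mag


noncomputable section
open AddMonoidAlgebra

abbrev R2 : Type := AddMonoidAlgebra ℚ (ℤ × ℤ)

example : NoZeroDivisors R2 := inferInstance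

def mon (p : ℤ × ℤ) : R2ˣ where
  val := AddMonoidAlgebra.single p 1
  inv := AddMonoidAlgebra.single (-p) 1
  val_inv := by
    rw [AddMonoidAlgebra.single_mul_single]; simp [AddMonoidAlgebra.one_def]
  inv_val := by
    rw [AddMonoidAlgebra.single_mul_single]; simp [AddMonoidAlgebra.one_def]

@[simp] lemma mon_val (p : ℤ × ℤ) : ((mon p : R2ˣ) : R2) = AddMonoidAlgebra.single p 1 := rfl

def monHom : Multiplicative (ℤ × ℤ) →* R2ˣ where
  toFun p := mon (Multiplicative.toAdd p)
  map_one' := by ext; simp [AddMonoidAlgebra.one_def]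
  map_mul' p q := by
    ext
    simp [AddMonoidAlgebra.single_mul_single]

lemma mon_add (p q : ℤ × ℤ) : mon (p + q) = mon p * mon q := monHom.map_mul _ _

lemma mon_zpow (p : ℤ × ℤ) (k : ℤ) : (mon p) ^ k = mon (k • p) := by
  have := monHom.map_zpow (Multiplicative.ofAdd p) k
  simpa [monHom, ← ofAdd_zsmul] using this.symm

def evu (α β : ℚˣ) : Multiplicative (ℤ × ℤ) →* ℚˣ :=
  ((zpowersHom ℚˣ α).comp (AddMonoidHom.fst ℤ ℤ).toMultiplicative) *
  ((zpowersHom ℚˣ β).comp (AddMonoidHom.snd ℤ ℤ).toMultiplicative)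

def ev (α β : ℚˣ) : R2 →+* ℚ :=
  ((AddMonoidAlgebra.lift ℚ ℚ (ℤ × ℤ)) ((Units.coeHom ℚ).comp (evu α β))).toRingHom

lemma ev_mon (α β : ℚˣ) (p : ℤ × ℤ) :
    ev α β ((mon p : R2ˣ) : R2) = (α : ℚ) ^ p.1 * (β : ℚ) ^ p.2 := by
  simp [ev, evu, AddMonoidAlgebra.lift_single, zpowersHom]

def castR : ((ℤ × ℤ) →₀ ℤ) →+ R2 :=
  AddMonoidAlgebra.coeffAddEquiv.symm.toAddMonoidHom.comp (Finsupp.mapRange.addMonoidHom (Int.castAddHom ℚ))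

lemma castR_injective : Function.Injective castR :=
  AddMonoidAlgebra.coeffAddEquiv.symm.injective.comp
    (Finsupp.mapRange_injective _ (by simp) (fun a b h => by simpa using h))

lemma castR_single (p : ℤ × ℤ) (k : ℤ) :
    castR (Finsupp.single p k) = (k : ℚ) • ((mon p : R2ˣ) : R2) := by
  have : castR (Finsupp.single p k) = AddMonoidAlgebra.ofCoeff (Finsupp.mapRange (Int.castAddHom ℚ) (by simp) (Finsupp.single p k)) := rfl
  rw [this, Finsupp.mapRange_single]
  simp [Finsupp.smul_single, AddMonoidAlgebra.ofCoeff_single, AddMonoidAlgebra.smul_single]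

end

/-! ### Group-theoretic structure of `M2` -/

noncomputable section
open Subgroup

namespace NoFix

abbrev A : M2 := mx false
abbrev B : M2 := mx true
abbrev T : M2 := ⁅A, B⁆

lemma mk_surj : Function.Surjective (QuotientGroup.mk : F2 → M2) :=
  QuotientGroup.mk_surjective

lemma T_mem : T ∈ commutator M2 :=
  Subgroup.commutator_mem_commutator (Subgroup.mem_top _) (Subgroup.mem_top _)

lemma commutator_M2 :
    commutator M2 = Subgroup.map (QuotientGroup.mk' secondDerived) (commutator F2) := by
  rw [commutator_def M2, commutator_def F2, Subgroup.map_commutator,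
    Subgroup.map_top_of_surjective _ mk_surj]

lemma comm_comm {a b : M2} (ha : a ∈ commutator M2) (hb : b ∈ commutator M2) :
    a * b = b * a := by
  rw [commutator_M2] at ha hb
  obtain ⟨x, hx, rfl⟩ := ha
  obtain ⟨y, hy, rfl⟩ := hb
  have h0 : ⁅x, y⁆ ∈ secondDerived := Subgroup.commutator_mem_commutator hx hy
  have h1 : (QuotientGroup.mk' secondDerived) ⁅x, y⁆ = 1 :=
    (QuotientGroup.eq_one_iff _).mpr h0
  rw [map_commutatorElement] at h1
  exact (commutatorElement_eq_one_iff_mul_comm.mp h1)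

lemma mem_comm_of_ab {x : M2} (h : Abelianization.of x = 1) : x ∈ commutator M2 :=
  (QuotientGroup.eq_one_iff x).mp h

lemma ab_eq_one {x : M2} (h : x ∈ commutator M2) : Abelianization.of x = 1 :=
  (QuotientGroup.eq_one_iff x).mpr h

/-- Normal form: every element of `M2` is `A^m B^n c` with `c` in the commutator. -/
lemma decomp (g : M2) :
    ∃ m n : ℤ, ∃ c ∈ commutator M2, g = A ^ m * B ^ n * c := by
  have Pmul : ∀ g g' : M2,
      (∃ m n : ℤ, ∃ c ∈ commutator M2, g = A ^ m * B ^ n * c) →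
      (∃ m n : ℤ, ∃ c ∈ commutator M2, g' = A ^ m * B ^ n * c) →
      (∃ m n : ℤ, ∃ c ∈ commutator M2, g * g' = A ^ m * B ^ n * c) := by
    rintro _ _ ⟨m, n, c, hc, rfl⟩ ⟨m', n', c', hc', rfl⟩
    refine ⟨m + m', n + n',
      (A ^ (m + m') * B ^ (n + n'))⁻¹ * (A ^ m * B ^ n * c * (A ^ m' * B ^ n' * c')), ?_, by group⟩
    apply mem_comm_of_ab
    simp only [map_mul, map_inv, map_zpow, ab_eq_one hc, ab_eq_one hc', mul_one]
    rw [inv_mul_eq_one, zpow_add, zpow_add, mul_mul_mul_comm]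
  obtain ⟨f, rfl⟩ := mk_surj g
  induction f using FreeGroup.induction_on with
  | C1 => exact ⟨0, 0, 1, one_mem _, by simp⟩
  | of x =>
      cases x
      · exact ⟨1, 0, 1, one_mem _, by show A = A ^ (1:ℤ) * B ^ (0:ℤ) * 1; simp⟩
      · exact ⟨0, 1, 1, one_mem _, by show B = A ^ (0:ℤ) * B ^ (1:ℤ) * 1; simp⟩
  | inv_of x _ =>
      cases x
      · refine ⟨-1, 0, 1, one_mem _, ?_⟩
        show A⁻¹ = A ^ (-1:ℤ) * B ^ (0:ℤ) * 1
        simp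
      · refine ⟨0, -1, 1, one_mem _, ?_⟩
        show B⁻¹ = A ^ (0:ℤ) * B ^ (-1:ℤ) * 1
        simp
  | mul x y ihx ihy =>
      rw [QuotientGroup.mk_mul]
      exact Pmul _ _ ihx ihy

/-- The commutator subgroup is contained in the normal closure of `T`. -/
lemma comm_le_ncl : commutator M2 ≤ normalClosure {T} := by
  set N := normalClosure {T}
  have : ∀ u v : M2, ⁅u, v⁆ ∈ N := by
    let qm : F2 →* M2 ⧸ N :=
      (QuotientGroup.mk' N).comp (QuotientGroup.mk' secondDerived)
    have hTN : (QuotientGroup.mk' N) T = 1 :=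
      (QuotientGroup.eq_one_iff _).mpr (Subgroup.subset_normalClosure rfl)
    have base : ∀ x y : Bool, Commute (qm (FreeGroup.of x)) (qm (FreeGroup.of y)) := by
      have hAB : Commute ((QuotientGroup.mk' N) A) ((QuotientGroup.mk' N) B) := by
        rw [← commutatorElement_eq_one_iff_commute, ← map_commutatorElement]
        exact hTN
      intro x y
      cases x <;> cases y
      · exact Commute.refl _
      · exact hAB
      · exact hAB.symm
      · exact Commute.refl _
    have step : ∀ f g : F2, Commute (qm f) (qm g) := by
      intro f
      induction f using FreeGroup.induction_on with
      | C1 => intro g; rw [map_one]; exact Commute.one_left _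
      | of x =>
          intro g
          induction g using FreeGroup.induction_on with
          | C1 => rw [map_one]; exact Commute.one_right _
          | of y => exact base x y
          | inv_of y _ => rw [map_inv]; exact (base x y).inv_right
          | mul a b iha ihb => rw [map_mul]; exact (iha).mul_right ihb
      | inv_of x ih => intro g; rw [map_inv]; exact (ih g).inv_left
      | mul a b iha ihb => intro g; rw [map_mul]; exact (iha g).mul_left (ihb g)
    intro u v
    obtain ⟨fu, rfl⟩ := mk_surj u
    obtain ⟨fv, rfl⟩ := mk_surj v
    apply (QuotientGroup.eq_one_iff _).mp
    have : (QuotientGroup.mk' N) ⁅(QuotientGroup.mk fu : M2), QuotientGroup.mk fv⁆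
        = ⁅qm fu, qm fv⁆ := by
      rw [map_commutatorElement]; rfl
    rw [← QuotientGroup.mk'_apply, this, commutatorElement_eq_one_iff_commute]
    exact step fu fv
  rw [commutator_def, Subgroup.commutator_le]
  intro g _ h _
  exact this g h

instance : CommGroup ↥(commutator M2) :=
  { (inferInstance : Group ↥(commutator M2)) with
    mul_comm := fun a b => Subtype.ext (comm_comm a.2 b.2) }

def xy (p : ℤ × ℤ) : M2 := A ^ p.1 * B ^ p.2

def conjT (p : ℤ × ℤ) : M2 := xy p * T * (xy p)⁻¹

lemma conjT_mem (p : ℤ × ℤ) : conjT p ∈ commutator M2 :=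
  (Subgroup.commutator_normal ⊤ ⊤).conj_mem T T_mem (xy p)

def conjTN (p : ℤ × ℤ) : ↥(commutator M2) := ⟨conjT p, conjT_mem p⟩

def mu0 : ((ℤ × ℤ) →₀ ℤ) →+ Additive ↥(commutator M2) :=
  Finsupp.liftAddHom fun p =>
    (zmultiplesHom (Additive ↥(commutator M2))) (Additive.ofMul (conjTN p))

def mu (f : (ℤ × ℤ) →₀ ℤ) : M2 := ((mu0 f).toMul : ↥(commutator M2))

lemma mu_mem (f : (ℤ × ℤ) →₀ ℤ) : mu f ∈ commutator M2 := ((mu0 f).toMul).2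

lemma mu_zero : mu 0 = 1 := by
  show ((Additive.toMul (mu0 0) : ↥(commutator M2)) : M2) = 1
  rw [map_zero]
  rfl

lemma mu_add (f g : (ℤ × ℤ) →₀ ℤ) : mu (f + g) = mu f * mu g := by
  simp only [mu, map_add]; rfl

lemma mu_single (p : ℤ × ℤ) (k : ℤ) : mu (Finsupp.single p k) = (conjT p) ^ k := by
  simp only [mu, mu0, Finsupp.liftAddHom_apply_single, zmultiplesHom_apply]
  rfl

lemma mu_surj {c : M2} (hc : c ∈ commutator M2) : ∃ f, mu f = c := by
  have hN : c ∈ normalClosure {T} := comm_le_ncl hc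
  clear hc
  rw [Subgroup.normalClosure] at hN
  induction hN using Subgroup.closure_induction with
  | mem x hx =>
      rw [Group.mem_conjugatesOfSet_iff] at hx
      obtain ⟨a, ha, hconj⟩ := hx
      rw [Set.mem_singleton_iff] at ha
      subst ha
      obtain ⟨u, hu⟩ := isConj_iff.mp hconj
      obtain ⟨m, n, c₀, hc₀, rfl⟩ := decomp u
      refine ⟨Finsupp.single (m, n) 1, ?_⟩
      rw [mu_single, zpow_one, ← hu]
      have h1 : c₀ * T * c₀⁻¹ = T := by
        rw [comm_comm hc₀ T_mem, mul_inv_cancel_right]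
      calc conjT (m, n) = A ^ m * B ^ n * (c₀ * T * c₀⁻¹) * (A ^ m * B ^ n)⁻¹ := by
            rw [h1]; rfl
        _ = A ^ m * B ^ n * c₀ * T * (A ^ m * B ^ n * c₀)⁻¹ := by group
  | one => exact ⟨0, mu_zero⟩
  | mul x y _ _ ihx ihy =>
      obtain ⟨f, rfl⟩ := ihx
      obtain ⟨f', rfl⟩ := ihy
      exact ⟨f + f', mu_add f f'⟩
  | inv x _ ihx =>
      obtain ⟨f, rfl⟩ := ihx
      refine ⟨-f, ?_⟩
      have := mu_add f (-f)
      rw [add_neg_cancel, mu_zero] at this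
      have h2 := mu_add (-f) f
      rw [neg_add_cancel, mu_zero] at h2
      exact eq_inv_of_mul_eq_one_left h2.symm

/-! ### The Magnus representation of `M2` -/

open Mag

abbrev X : R2ˣ := mon (1, 0)
abbrev Y : R2ˣ := mon (0, 1)

def e1 : R2 × R2 := (1, 0)
def e2 : R2 × R2 := (0, 1)

def wv : R2 × R2 := ((1 : R2) - (Y : R2), (X : R2) - 1)

def psi0 : F2 →* Mag R2 :=
  FreeGroup.lift fun b => if b then ⟨Y, e2⟩ else ⟨X, e1⟩

lemma mag_commute_of_a_one {g h : Mag R2} (hg : g.a = 1) (hh : h.a = 1) :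
    Commute g h := by
  show g * h = h * g
  ext <;> simp [hg, hh, add_comm]

lemma psi0_kills : secondDerived ≤ psi0.ker := by
  have hcomm_le : Subgroup.map psi0 (commutator F2) ≤ MonoidHom.ker (projA (R := R2)) := by
    rw [commutator_def, Subgroup.map_commutator]
    calc ⁅Subgroup.map psi0 ⊤, Subgroup.map psi0 ⊤⁆ ≤ ⁅(⊤ : Subgroup (Mag R2)), ⊤⁆ :=
          Subgroup.commutator_mono le_top le_top
      _ ≤ MonoidHom.ker projA := by
          rw [← commutator_def]
          exact Abelianization.commutator_subset_ker (projA (R := R2))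
  have hbot : Subgroup.map psi0 secondDerived ≤ ⊥ := by
    rw [Subgroup.map_commutator, Subgroup.commutator_le]
    intro g hg h hh
    have hga : g.a = 1 := MonoidHom.mem_ker.mp (hcomm_le hg)
    have hha : h.a = 1 := MonoidHom.mem_ker.mp (hcomm_le hh)
    rw [Subgroup.mem_bot, commutatorElement_eq_one_iff_commute]
    exact mag_commute_of_a_one hga hha
  intro x hx
  exact Subgroup.mem_bot.mp (hbot ⟨x, hx, rfl⟩)

def psi : M2 →* Mag R2 :=
  QuotientGroup.lift secondDerived psi0 fun x hx => psi0_kills hx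

@[simp] lemma psi_mk (f : F2) : psi (QuotientGroup.mk f) = psi0 f := rfl

lemma psi_A : psi A = ⟨X, e1⟩ := by
  show psi0 (FreeGroup.of false) = _
  rw [psi0, FreeGroup.lift_apply_of]
  rfl

lemma psi_B : psi B = ⟨Y, e2⟩ := by
  show psi0 (FreeGroup.of true) = _
  rw [psi0, FreeGroup.lift_apply_of]
  rfl

lemma psi_a_one {c : M2} (hc : c ∈ commutator M2) : (psi c).a = 1 :=
  MonoidHom.mem_ker.mp (Abelianization.commutator_subset_ker (projA.comp psi) hc)

lemma mon_factor (p : ℤ × ℤ) : X ^ p.1 * Y ^ p.2 = mon p := by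
  rw [mon_zpow, mon_zpow, ← mon_add]
  congr 1
  simp [Prod.ext_iff]

lemma psi_xy_a (p : ℤ × ℤ) : (psi (xy p)).a = mon p := by
  show projA (psi (xy p)) = mon p
  rw [xy, map_mul, map_zpow, map_zpow, psi_A, psi_B, map_mul, map_zpow, map_zpow]
  exact mon_factor p

lemma psi_conj_unip {u t : M2} {v : R2 × R2} (ht : psi t = ⟨1, v⟩) :
    psi (u * t * u⁻¹) = ⟨1, ((psi u).a : R2) • v⟩ := by
  rw [map_mul, map_mul, map_inv, ht]
  exact conj_unip (psi u) v

lemma psi_T : psi T = ⟨1, wv⟩ := by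
  show psi ⁅A, B⁆ = _
  rw [map_commutatorElement, psi_A, psi_B, commElt]
  congr 1
  show (1 - (Y : R2)) • e1 + ((X : R2) - 1) • e2 = wv
  simp [e1, e2, wv, Prod.ext_iff]

lemma psi_conjT (p : ℤ × ℤ) :
    psi (conjT p) = ⟨1, ((mon p : R2ˣ) : R2) • wv⟩ := by
  rw [conjT, psi_conj_unip psi_T, psi_xy_a]

lemma psi_mu (f : (ℤ × ℤ) →₀ ℤ) : psi (mu f) = ⟨1, castR f • wv⟩ := by
  induction f using Finsupp.induction with
  | zero => rw [mu_zero, map_one, map_zero, zero_smul]; rfl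
  | single_add p k f hp hk ih =>
      rw [mu_add, map_mul, mu_single, map_zpow, psi_conjT, unip_zpow, ih, unip_mul]
      congr 1
      rw [map_add, add_smul, castR_single, smul_assoc, Int.cast_smul_eq_zsmul]

/-! ### Evaluations and nonvanishing -/

def tau : R2 := (X : R2) + (Y : R2) - 2 * ((X : R2) * (Y : R2))

def u2 : ℚˣ := Units.mk0 2 (by norm_num)
def u23 : ℚˣ := Units.mk0 (2/3) (by norm_num)

@[simp] lemma u2_val : (u2 : ℚ) = 2 := rfl
@[simp] lemma u23_val : (u23 : ℚ) = 2/3 := rfl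

lemma ev_Xpow (α β : ℚˣ) (k : ℤ) :
    ev α β ((X ^ k : R2ˣ) : R2) = (α : ℚ) ^ k := by
  rw [mon_zpow, ev_mon]
  simp

lemma ev_Ypow (α β : ℚˣ) (k : ℤ) :
    ev α β ((Y ^ k : R2ˣ) : R2) = (β : ℚ) ^ k := by
  rw [mon_zpow, ev_mon]
  simp

lemma ev_X (α β : ℚˣ) : ev α β (X : R2) = (α : ℚ) := by
  have := ev_Xpow α β 1; simpa using this

lemma ev_Y (α β : ℚˣ) : ev α β (Y : R2) = (β : ℚ) := by
  have := ev_Ypow α β 1; simpa using this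

lemma ev_XYpow (α β : ℚˣ) (k l : ℤ) :
    ev α β ((X ^ k * Y ^ l : R2ˣ) : R2) = (α : ℚ) ^ k * (β : ℚ) ^ l := by
  rw [Units.val_mul, map_mul, ev_Xpow, ev_Ypow]

lemma hX1 : (X : R2) - 1 ≠ 0 := by
  intro h
  have := congrArg (ev u2 u2) h
  rw [map_sub, map_one, map_zero, ev_X] at this
  norm_num at this

lemma hY1 : (Y : R2) - 1 ≠ 0 := by
  intro h
  have := congrArg (ev u2 u23) h
  rw [map_sub, map_one, map_zero, ev_Y] at this
  norm_num at this

lemma tau_ne : tau ≠ 0 := by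
  intro h
  have := congrArg (ev u2 u2) h
  simp only [tau, map_sub, map_add, map_mul, map_zero, map_ofNat, ev_X, ev_Y, u2_val] at this
  norm_num at this

lemma tau_eval : ev u2 u23 tau = 0 := by
  simp only [tau, map_sub, map_add, map_mul, map_ofNat, ev_X, ev_Y, u2_val, u23_val]
  norm_num

/-- If `2^a = 3^b` in `ℚ`, then `a = b = 0`. -/
lemma two_three (a b : ℤ) (h : (2:ℚ) ^ a = (3:ℚ) ^ b) : a = 0 ∧ b = 0 := by
  set p := a.toNat
  set p' := (-a).toNat
  set q := b.toNat
  set q' := (-b).toNat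
  have key : (2:ℚ) ^ (p:ℤ) * 3 ^ (q':ℤ) = 3 ^ (q:ℤ) * 2 ^ (p':ℤ) := by
    rw [show (p:ℤ) = a + p' by simp only [p, p']; omega,
        show (q:ℤ) = b + q' by simp only [q, q']; omega,
        zpow_add₀ (by norm_num : (2:ℚ) ≠ 0), zpow_add₀ (by norm_num : (3:ℚ) ≠ 0), h]
    ring
  have keyN : 2 ^ p * 3 ^ q' = 3 ^ q * 2 ^ p' := by
    have : ((2 ^ p * 3 ^ q' : ℕ) : ℚ) = ((3 ^ q * 2 ^ p' : ℕ) : ℚ) := by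
      push_cast
      rw [← zpow_natCast (2:ℚ) p, ← zpow_natCast (3:ℚ) q', ← zpow_natCast (3:ℚ) q,
        ← zpow_natCast (2:ℚ) p']
      exact key
    exact_mod_cast this
  have hne1 : (2:ℕ) ^ p * 3 ^ q' ≠ 0 := by positivity
  have h2 : p = p' := by
    have := congrArg (fun t => t.factorization 2) keyN
    simp only [Nat.factorization_mul (pow_ne_zero p (by norm_num : (2:ℕ) ≠ 0))
        (pow_ne_zero q' (by norm_num : (3:ℕ) ≠ 0)),
      Nat.factorization_mul (pow_ne_zero q (by norm_num : (3:ℕ) ≠ 0))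
        (pow_ne_zero p' (by norm_num : (2:ℕ) ≠ 0)),
      Nat.factorization_pow, Nat.Prime.factorization Nat.prime_two,
      Nat.Prime.factorization Nat.prime_three,
      Finsupp.add_apply, Finsupp.smul_apply, Finsupp.single_apply] at this
    simpa using this
  have h3 : q = q' := by
    have := congrArg (fun t => t.factorization 3) keyN
    simp only [Nat.factorization_mul (pow_ne_zero p (by norm_num : (2:ℕ) ≠ 0))
        (pow_ne_zero q' (by norm_num : (3:ℕ) ≠ 0)),
      Nat.factorization_mul (pow_ne_zero q (by norm_num : (3:ℕ) ≠ 0))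
        (pow_ne_zero p' (by norm_num : (2:ℕ) ≠ 0)),
      Nat.factorization_pow, Nat.Prime.factorization Nat.prime_two,
      Nat.Prime.factorization Nat.prime_three,
      Finsupp.add_apply, Finsupp.smul_apply, Finsupp.single_apply] at this
    simpa using this.symm
  constructor <;> omega

/-! ### The `φ`-side computations -/

section Phi

variable {s : M2} {φ : M2 →* M2} {σ : R2 × R2}

lemma wv_eq : wv = (1 - (Y : R2)) • e1 + ((X : R2) - 1) • e2 := by
  simp [wv, e1, e2, Prod.ext_iff]

lemma psiphi_A (hφ1 : φ A = A * s) (hps : psi s = ⟨1, σ⟩) :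
    psi (φ A) = ⟨X, e1 + (X : R2) • σ⟩ := by
  rw [hφ1, map_mul, psi_A, hps, mul_mk]
  congr 1
  exact mul_one X

lemma psiphi_B (hφ2 : φ B = B * s⁻¹) (hps : psi s = ⟨1, σ⟩) :
    psi (φ B) = ⟨Y, e2 - (Y : R2) • σ⟩ := by
  rw [hφ2, map_mul, map_inv, psi_B, hps, inv_mk, mul_mk]
  congr 1
  · exact mul_one Y
  · rw [inv_one]
    show e2 + (Y : R2) • -((((1:R2ˣ) : R2)) • σ) = e2 - (Y : R2) • σ
    rw [Units.val_one, one_smul, smul_neg, ← sub_eq_add_neg]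

lemma psiphi_T (hφ1 : φ A = A * s) (hφ2 : φ B = B * s⁻¹) (hps : psi s = ⟨1, σ⟩) :
    psi (φ T) = ⟨1, wv + tau • σ⟩ := by
  show psi (φ ⁅A, B⁆) = _
  rw [map_commutatorElement, map_commutatorElement, psiphi_A hφ1 hps, psiphi_B hφ2 hps, commElt]
  congr 1
  show (1 - (Y:R2)) • (e1 + (X:R2) • σ) + ((X:R2) - 1) • (e2 - (Y:R2) • σ) = wv + tau • σ
  rw [wv_eq, tau]
  module

lemma psiphi_xy_a (hφ1 : φ A = A * s) (hφ2 : φ B = B * s⁻¹) (hps : psi s = ⟨1, σ⟩)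
    (p : ℤ × ℤ) : (psi (φ (xy p))).a = mon p := by
  show projA (psi (φ (xy p))) = mon p
  rw [xy, map_mul, map_zpow, map_zpow, map_mul, map_zpow, map_zpow, map_mul, map_zpow, map_zpow,
    psiphi_A hφ1 hps, psiphi_B hφ2 hps]
  exact mon_factor p

lemma psiphi_conjT (hφ1 : φ A = A * s) (hφ2 : φ B = B * s⁻¹) (hps : psi s = ⟨1, σ⟩)
    (p : ℤ × ℤ) :
    psi (φ (conjT p)) = ⟨1, ((mon p : R2ˣ) : R2) • (wv + tau • σ)⟩ := by
  have : φ (conjT p) = φ (xy p) * φ T * (φ (xy p))⁻¹ := by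
    rw [conjT, map_mul, map_mul, map_inv]
  rw [this, psi_conj_unip (psiphi_T hφ1 hφ2 hps), psiphi_xy_a hφ1 hφ2 hps]

lemma psiphi_mu (hφ1 : φ A = A * s) (hφ2 : φ B = B * s⁻¹) (hps : psi s = ⟨1, σ⟩)
    (f : (ℤ × ℤ) →₀ ℤ) :
    psi (φ (mu f)) = ⟨1, castR f • (wv + tau • σ)⟩ := by
  induction f using Finsupp.induction with
  | zero => rw [mu_zero, map_one, map_one, map_zero, zero_smul]; rfl
  | single_add p k f hp hk ih =>
      rw [mu_add, map_mul, map_mul, mu_single, map_zpow, map_zpow,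
        psiphi_conjT hφ1 hφ2 hps, unip_zpow, ih, unip_mul]
      congr 1
      rw [map_add, add_smul, castR_single, smul_assoc, Int.cast_smul_eq_zsmul]

end Phi

end NoFix
end

open NoFix in
/-- In the free metabelian group `M₂` on `x₁, x₂`, if `s ∈ M₂'` with `s ≠ 1`
and `φ` is the IA-endomorphism with `φ(x₁) = x₁ s`, `φ(x₂) = x₂ s⁻¹`, then
`φ` has no non-trivial fixed points. -/
theorem no_fixed_points (s : M2) (hs : s ∈ commutator M2) (hs1 : s ≠ 1)
    (φ : M2 →* M2)
    (hφ1 : φ (mx false) = mx false * s)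
    (hφ2 : φ (mx true) = mx true * s⁻¹) :
    ∀ g : M2, φ g = g → g = 1 := by
  intro g hg
  obtain ⟨fs, hfs⟩ := mu_surj hs
  obtain ⟨m, n, c, hc, rfl⟩ := decomp g
  obtain ⟨f, rfl⟩ := mu_surj hc
  clear hc
  set σ : R2 × R2 := castR fs • wv with hσdef
  have hps : psi s = ⟨1, σ⟩ := by rw [← hfs, psi_mu]
  have hfs0 : castR fs ≠ 0 := by
    intro h0
    exact hs1 (by
      rw [← hfs, show fs = 0 from castR_injective (by rw [h0, map_zero]), mu_zero])
  obtain ⟨r₁, hr₁, hrel₁⟩ := Mag.zpow_exists X e1 m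
  obtain ⟨r₂, hr₂, hrel₂⟩ := Mag.zpow_exists Y e2 n
  obtain ⟨r₁', hr₁', hrel₁'⟩ := Mag.zpow_exists X (e1 + (X : R2) • σ) m
  obtain ⟨r₂', hr₂', hrel₂'⟩ := Mag.zpow_exists Y (e2 - (Y : R2) • σ) n
  have hrr1 : r₁' = r₁ := mul_left_cancel₀ hX1 (hrel₁'.trans hrel₁.symm)
  have hrr2 : r₂' = r₂ := mul_left_cancel₀ hY1 (hrel₂'.trans hrel₂.symm)
  rw [hrr1] at hr₁' hrel₁'
  rw [hrr2] at hr₂' hrel₂'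
  have heq := congrArg psi hg
  simp only [map_mul, map_zpow] at heq
  rw [psiphi_A hφ1 hps, psiphi_B hφ2 hps, psiphi_mu hφ1 hφ2 hps f,
    psi_A, psi_B, psi_mu, hr₁, hr₂, hr₁', hr₂',
    Mag.mul_mk, Mag.mul_mk, Mag.mul_mk, Mag.mul_mk, Mag.mk.injEq] at heq
  have h2 := congrArg Prod.snd heq.2
  simp only [hσdef, Prod.snd_add, Prod.snd_sub, Prod.smul_snd, Prod.smul_mk, smul_eq_mul,
    e1, e2, wv, mul_zero, mul_one, add_zero, zero_add] at h2
  have hQ : (r₁ * (X : R2) - ((X ^ m : R2ˣ) : R2) * ((Y : R2) * r₂)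
      + ((X ^ m * Y ^ n : R2ˣ) : R2) * (castR f * tau))
      * (castR fs * ((X : R2) - 1)) = 0 := by
    linear_combination h2
  have hQ0 : r₁ * (X : R2) - ((X ^ m : R2ˣ) : R2) * ((Y : R2) * r₂)
      + ((X ^ m * Y ^ n : R2ˣ) : R2) * (castR f * tau) = 0 := by
    rcases mul_eq_zero.mp hQ with h | h
    · exact h
    · rcases mul_eq_zero.mp h with h' | h'
      · exact absurd h' hfs0
      · exact absurd h' hX1
  have hev := congrArg (ev u2 u23) hQ0
  simp only [map_add, map_sub, map_mul, map_zero, ev_X, ev_Y, ev_Xpow, ev_XYpow,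
    tau_eval, u2_val, u23_val, mul_zero, add_zero, zero_mul] at hev
  have hev1 := congrArg (ev u2 u23) hrel₁
  simp only [map_sub, map_mul, map_one, ev_X, ev_Xpow, u2_val, u23_val] at hev1
  have hev2 := congrArg (ev u2 u23) hrel₂
  simp only [map_sub, map_mul, map_one, ev_Y, ev_Ypow, u2_val, u23_val] at hev2
  have htwo : (2:ℚ) ^ m * ((2:ℚ)/3) ^ n = 1 := by
    linear_combination (1/2) * hev - hev1 - (2:ℚ) ^ m * hev2
  have h23 : (2:ℚ) ^ (m + n) = 3 ^ n := by
    rw [div_zpow] at htwo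
    rw [zpow_add₀ (by norm_num : (2:ℚ) ≠ 0)]
    have h3n : ((3:ℚ)) ^ n ≠ 0 := zpow_ne_zero _ (by norm_num)
    field_simp at htwo
    linarith [htwo]
  obtain ⟨hmn0, hn0⟩ := two_three _ _ h23
  have hm0 : m = 0 := by omega
  subst hm0
  subst hn0
  have hr10 : r₁ = 0 := by
    rw [zpow_zero, Units.val_one, sub_self] at hrel₁
    rcases mul_eq_zero.mp hrel₁ with h | h
    · exact absurd h hX1
    · exact h
  have hr20 : r₂ = 0 := by
    rw [zpow_zero, Units.val_one, sub_self] at hrel₂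
    rcases mul_eq_zero.mp hrel₂ with h | h
    · exact absurd h hY1
    · exact h
  rw [hr10, hr20, zpow_zero, zpow_zero] at hQ0
  have hQ0' : castR f * tau = 0 := by
    simp only [Units.val_mul, Units.val_one, one_mul, zero_mul, mul_zero, sub_zero,
      zero_sub, neg_zero, zero_add] at hQ0
    linear_combination hQ0
  have hcf : castR f = 0 := by
    rcases mul_eq_zero.mp hQ0' with h | h
    · exact h
    · exact absurd h tau_ne
  have hf : f = 0 := castR_injective (by rw [hcf, map_zero])
  rw [hf, mu_zero, zpow_zero, zpow_zero]
  simp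
end
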